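/- arXiv:1612.07638 — 2 statements merged into one kernel-verified Lean document; each statement's English description precedes it below -/
import Mathlib

section
/- Let (R,m) be a Noetherian local ring, let a, b be ideals, and let p_1,...,p_n be prime ideals such that ab ⊄ p_j for all j ≤ n. Let x ∈ ab with x ∉ p_j for all j ≤ n. Then there exist elements a_1,...,a_r ∈ a and b_1,...,b_r ∈ b such that x = a_1b_1 + ⋯ + a_rb_r, and moreover a_ib_i ∉ p_j and a_1b_1 + ⋯ + a_ib_i ∉ p_j for all i ≤ r and all j ≤ n. -/
open Submodule IsLocalRing Classical CategoryTheory

section Defs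

variable (R : Type) [CommRing R]

/-- Krull dimension of a module: `dim (R / Ann M)`. -/
noncomputable def moduleDim (M : Type) [AddCommGroup M] [Module R M] : WithBot ℕ∞ :=
  ringKrullDim (R ⧸ Module.annihilator R M)

/-- Length of a module, as the Krull dimension of its lattice of submodules
(read as `0` if the module is zero or not of finite length). -/
noncomputable def flen (M : Type) [AddCommGroup M] [Module R M] : ℕ :=
  ((Order.krullDim (Submodule R M)).unbotD 0).toNat

/-- Krull dimension of a module, as a natural number. -/
noncomputable def dimnat (N : Type) [AddCommGroup N] [Module R N] : ℕ :=
  ((moduleDim R N).unbotD 0).toNat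

variable {R}

/-- A system of parameters of `M`: `d` elements of the maximal ideal such that the quotient
of `M` by the submodule they generate has dimension `≤ 0` (i.e. finite length). -/
def IsSOP [IsLocalRing R] {d : ℕ} (M : Type) [AddCommGroup M] [Module R M]
    (x : Fin d → R) : Prop :=
  (∀ i, x i ∈ maximalIdeal R) ∧
    moduleDim R (M ⧸ (Ideal.span (Set.range x) • ⊤ : Submodule R M)) ≤ 0

variable (R)

/-- The ideal `b(M)`: the intersection, over all systems of parameters `x₁, …, x_d` of `M`
and all `i ≤ d`, of the annihilators of `((x₁,…,x_{i-1})M : x_i)/(x₁,…,x_{i-1})M`. -/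
noncomputable def bIdeal [IsLocalRing R] (M : Type) [AddCommGroup M] [Module R M]
    (d : ℕ) : Ideal R :=
  ⨅ (x : Fin d → R) (_ : IsSOP M x) (i : Fin d),
    Module.annihilator R
      ↥(LinearMap.ker (LinearMap.lsmul R
        (M ⧸ (Ideal.span (x '' {j | j < i}) • ⊤ : Submodule R M)) (x i)))

variable {R}

/-- A parameter element of the `d`-dimensional module `M`:
an element of the maximal ideal with `dim M/xM = d - 1`. -/
def IsParamElt [IsLocalRing R] (d : ℕ) (M : Type) [AddCommGroup M] [Module R M]
    (x : R) : Prop :=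
  x ∈ maximalIdeal R ∧
    moduleDim R (M ⧸ (Ideal.span {x} • ⊤ : Submodule R M)) = ((d - 1 : ℕ) : WithBot ℕ∞)

/-- `U` is the unmixed component `U_M(0)` of the `d`-dimensional module `M`:
the largest submodule of dimension `< d`. -/
def IsUnmixedComponent (d : ℕ) {M : Type} [AddCommGroup M] [Module R M]
    (U : Submodule R M) : Prop :=
  moduleDim R ↥U < (d : WithBot ℕ∞) ∧
    ∀ N : Submodule R M, moduleDim R ↥N < (d : WithBot ℕ∞) → N ≤ U

/-- The depth of a module over a local ring: the supremum of lengths of regular sequences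
contained in the maximal ideal. -/
noncomputable def moduleDepth (S : Type) [CommRing S] [IsLocalRing S]
    (N : Type) [AddCommGroup N] [Module S N] : ℕ∞ :=
  ⨆ (rs : List S) (_ : ∀ r ∈ rs, r ∈ maximalIdeal S)
    (_ : RingTheory.Sequence.IsRegular N rs), (rs.length : ℕ∞)

/-- A witness that `R` is a homomorphic image of a Cohen–Macaulay Noetherian local ring. -/
structure CMQuotientWitness (R : Type) [CommRing R] where
  S : Type
  [commRing : CommRing S]
  [localRing : IsLocalRing S]
  noetherian : IsNoetherianRing S
  depth_eq_dim : (moduleDepth S S : WithBot ℕ∞) = moduleDim S S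
  f : S →+* R
  surjective : Function.Surjective f

variable (R)

/-- The Hilbert–Samuel multiplicity `e₀(I, M)` of a `d`-dimensional module `M`, characterized by
`ℓ(M/I^{n+1}M) · d! / n^d → e₀(I, M)`. -/
noncomputable def mult (I : Ideal R) (M : Type) [AddCommGroup M] [Module R M]
    (d : ℕ) : ℕ :=
  if h : ∃ e : ℕ, Filter.Tendsto
      (fun n : ℕ =>
        (flen R (M ⧸ ((I ^ (n + 1)) • ⊤ : Submodule R M)) : ℝ) * (Nat.factorial d) / ((n : ℝ) ^ d))
      Filter.atTop (nhds (e : ℝ))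
  then h.choose else 0

/-- `x` is a superficial element of `M` with respect to `I`. -/
def IsSuperficial [IsLocalRing R] (I : Ideal R) (M : Type) [AddCommGroup M] [Module R M]
    (x : R) : Prop :=
  x ∈ I ∧ x ∉ maximalIdeal R * I ∧ ∃ c : ℕ, ∀ n ≥ c,
    (Submodule.comap (LinearMap.lsmul R M x) ((I ^ (n + 1)) • ⊤) ⊓ ((I ^ c) • ⊤)
      : Submodule R M) = (I ^ n) • ⊤

/-- `ℓ_{R_p}(H⁰_{pR_p}(M_p))`: the length over `R_p` of the `pR_p`-torsion of `M_p`. -/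
noncomputable def locLenH0 (p : Ideal R) (M : Type) [AddCommGroup M] [Module R M] : ℕ :=
  if hp : p.IsPrime then
    letI := hp
    flen (Localization.AtPrime p)
      ↥(⨆ k : ℕ, Submodule.torsionBySet (Localization.AtPrime p)
          (LocalizedModule p.primeCompl M)
          ((Ideal.map (algebraMap R (Localization.AtPrime p)) p ^ k : Ideal _) : Set _))
  else 0

/-- `ℓ_{R_p}(M_p)`: the length of the localization of `M` at `p` over `R_p`. -/
noncomputable def locLen (p : Ideal R) (M : Type) [AddCommGroup M] [Module R M] : ℕ :=
  if hp : p.IsPrime then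
    letI := hp
    flen (Localization.AtPrime p) (LocalizedModule p.primeCompl M)
  else 0

/-- The arithmetic degree `adeg(I, M) = Σ_{p ∈ Ass M} ℓ_{R_p}(H⁰_{pR_p}(M_p)) · e₀(I, R/p)`. -/
noncomputable def adeg (I : Ideal R) (M : Type) [AddCommGroup M] [Module R M] : ℕ :=
  ∑ᶠ p ∈ associatedPrimes R M, locLenH0 R p M * mult R I (R ⧸ p) (dimnat R (R ⧸ p))

variable {R}

/-- An `I`-filter regular sequence on `M`. -/
def IsFilterRegularSeq (I : Ideal R) (M : Type) [AddCommGroup M] [Module R M]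
    {t : ℕ} (x : Fin t → R) : Prop :=
  (∀ i, x i ∈ I) ∧ ∀ i : Fin t,
    Module.support R ↥(LinearMap.ker (LinearMap.lsmul R
      (M ⧸ (Ideal.span (x '' {j | j < i}) • ⊤ : Submodule R M)) (x i)))
      ⊆ PrimeSpectrum.zeroLocus (I : Set R)

end Defs


/-!
If `ab = R`, the single term `x · 1` works. Otherwise no `p_j` is the maximal ideal, so every
`R/p_j` is an infinite domain. There an affine condition `c α + e ∉ p_j` (with `c, e` not both in
`p_j`) excludes only one residue class, so finitely many such conditions can be met at once by
some `α ∈ a`, simultaneously for all `j`. Applying this, each product `m t` is rewritten as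
`(α + m)(β + t) - α (β + t) - (α + m) β + α β` with every factor outside every `p_j`. Finally the
first term `A B` of such a decomposition is split as `A (B - δ) + A δ` with `A δ` moved to the end:
every proper partial sum is then `A (B - δ)` plus a partial sum of the remaining terms, affine in
`δ`, and a suitable `δ ∈ b` avoids all of them.
-/

theorem exists_forall_mul_add_ne_zero {D : Type*} [CommRing D] [IsDomain D] [Infinite D]
    (F : Finset (D × D)) (hF : ∀ z ∈ F, z ≠ 0) : ∃ t : D, ∀ z ∈ F, z.1 * t + z.2 ≠ 0 := by
  have hroots : (⋃ z ∈ F, {t : D | z.1 * t + z.2 = 0}).Finite := by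
    refine F.finite_toSet.biUnion fun z hz => Set.Subsingleton.finite fun t ht t' ht' => ?_
    have hz1 : z.1 ≠ 0 := fun h => hF z hz (Prod.ext h (by simpa [h] using ht))
    exact mul_left_cancel₀ hz1 (add_right_cancel (ht.trans ht'.symm))
  obtain ⟨t, ht⟩ := hroots.infinite_compl.nonempty
  exact ⟨t, fun z hz h => ht (Set.mem_biUnion hz h)⟩

theorem Ideal.exists_mem_forall_mul_add_notMem {R : Type*} [CommRing R] (a : Ideal R)
    (F : Finset (R × R)) (s : Finset (Ideal R)) (hprime : ∀ q ∈ s, q.IsPrime)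
    (hinf : ∀ q ∈ s, Infinite (R ⧸ q)) (ha : ∀ q ∈ s, ¬ a ≤ q)
    (hF : ∀ q ∈ s, ∀ z ∈ F, z.1 ∉ q ∨ z.2 ∉ q) :
    ∃ α ∈ a, ∀ q ∈ s, ∀ z ∈ F, z.1 * α + z.2 ∉ q := by
  induction s using Finset.strongInduction with
  | H s ih =>
  rcases s.eq_empty_or_nonempty with rfl | hne
  · exact ⟨0, a.zero_mem, by simp⟩
  obtain ⟨q₀, hq₀, hmin⟩ := s.exists_minimal hne
  have hq₀prime := hprime q₀ hq₀
  have := hinf q₀ hq₀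
  obtain ⟨α', hα'a, hα'⟩ := ih (s.erase q₀) (s.erase_ssubset hq₀)
    (fun q hq => hprime q (Finset.mem_of_mem_erase hq))
    (fun q hq => hinf q (Finset.mem_of_mem_erase hq))
    (fun q hq => ha q (Finset.mem_of_mem_erase hq))
    (fun q hq => hF q (Finset.mem_of_mem_erase hq))
  -- minimality of `q₀` lets us perturb `α'` by multiples of `d` without leaving the other primes
  obtain ⟨d, hd, hdq₀⟩ : ∃ d ∈ a * ∏ q ∈ s.erase q₀, q, d ∉ q₀ := by
    refine SetLike.not_le_iff_exists.mp fun h => ?_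
    rcases (Ideal.IsPrime.mul_le hq₀prime).mp h with h | h
    · exact ha q₀ hq₀ h
    · obtain ⟨q, hq, hqq₀⟩ := (Ideal.IsPrime.prod_le hq₀prime).mp h
      exact Finset.ne_of_mem_erase hq (le_antisymm hqq₀ (hmin (Finset.mem_of_mem_erase hq) hqq₀))
  have hda : d ∈ a := Ideal.mul_le_left hd
  have hdq : ∀ q ∈ s.erase q₀, d ∈ q := fun q hq =>
    (Ideal.mul_le_right.trans (Ideal.prod_le_inf.trans (Finset.inf_le hq))) hd
  obtain ⟨t, ht⟩ := exists_forall_mul_add_ne_zero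
    (F.image fun z => (Ideal.Quotient.mk q₀ (z.1 * d), Ideal.Quotient.mk q₀ (z.1 * α' + z.2)))
    (by
      simp only [Finset.mem_image, ne_eq, forall_exists_index, and_imp]
      rintro _ z hz rfl h
      simp only [Prod.mk_eq_zero, Ideal.Quotient.eq_zero_iff_mem] at h
      have hz1 : z.1 ∈ q₀ := (hq₀prime.mem_or_mem h.1).resolve_right hdq₀
      refine (hF q₀ hq₀ z hz).elim (· hz1) (· ?_)
      simpa using q₀.sub_mem h.2 (q₀.mul_mem_right α' hz1))
  obtain ⟨t, rfl⟩ := Ideal.Quotient.mk_surjective t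
  refine ⟨α' + t * d, a.add_mem hα'a (a.mul_mem_left t hda), fun q hq z hz hmem => ?_⟩
  by_cases hqq₀ : q = q₀
  · subst hqq₀
    refine ht _ (Finset.mem_image_of_mem _ hz) ?_
    rw [← map_mul, ← map_add, Ideal.Quotient.eq_zero_iff_mem]
    convert hmem using 1
    ring
  · have hq' : q ∈ s.erase q₀ := Finset.mem_erase.mpr ⟨hqq₀, hq⟩
    refine hα' q hq' z hz ?_
    convert q.sub_mem hmem (q.mul_mem_left (z.1 * t) (hdq q hq')) using 1
    ring

theorem IsLocalRing.infinite_quotient_of_ne_maximalIdeal {R : Type*} [CommRing R] [IsLocalRing R]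
    {q : Ideal R} [q.IsPrime] (hq : q ≠ maximalIdeal R) : Infinite (R ⧸ q) := by
  by_contra hfin
  have := not_infinite_iff_finite.mp hfin
  exact hq (eq_maximalIdeal (Ideal.Quotient.maximal_of_isField _ (Finite.isField_of_domain _)))

theorem sum_filter_le_eq_sum_take {M α : Type*} [AddCommMonoid M] (f : α → M) (L : List α)
    (i : Fin L.length) :
    ∑ k ∈ Finset.univ.filter (fun k => k ≤ i), f L[k] = ((L.map f).take (i + 1)).sum := by
  rw [← List.ofFn_getElem_eq_map, List.sum_take_ofFn]
  simp only [Fin.le_def, Nat.lt_succ_iff]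
  rfl

section

variable {R : Type*} [CommRing R]

theorem Ideal.exists_list_sum_map_mul_eq {a b : Ideal R} {s : Finset (Ideal R)}
    (hprime : ∀ q ∈ s, q.IsPrime) (hinf : ∀ q ∈ s, Infinite (R ⧸ q))
    (ha : ∀ q ∈ s, ¬ a ≤ q) (hb : ∀ q ∈ s, ¬ b ≤ q) {x : R} (hx : x ∈ a * b) :
    ∃ L : List (R × R), (∀ z ∈ L, z.1 ∈ a ∧ z.2 ∈ b ∧ ∀ q ∈ s, z.1 * z.2 ∉ q) ∧
      (L.map fun z => z.1 * z.2).sum = x := by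
  have hconds (c : R) : ∀ q ∈ s, ∀ z ∈ ({(1, 0), (1, c)} : Finset (R × R)), z.1 ∉ q ∨ z.2 ∉ q := by
    simp only [Finset.mem_insert, Finset.mem_singleton]
    rintro q hq z (rfl | rfl) <;> exact .inl (hprime q hq).one_notMem
  induction hx using Submodule.mul_induction_on' with
  | mem_mul_mem m hm t ht =>
    obtain ⟨α, hα, hαs⟩ := Ideal.exists_mem_forall_mul_add_notMem a _ s hprime hinf ha (hconds m)
    obtain ⟨β, hβ, hβs⟩ := Ideal.exists_mem_forall_mul_add_notMem b _ s hprime hinf hb (hconds t)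
    simp only [Finset.mem_insert, Finset.mem_singleton, forall_eq_or_imp, forall_eq, one_mul,
      add_zero] at hαs hβs
    refine ⟨[(α + m, β + t), (α, -(β + t)), (-(α + m), β), (α, β)], ?_, ?_⟩
    · simp only [List.mem_cons, List.not_mem_nil, or_false]
      rintro z (rfl | rfl | rfl | rfl) <;>
        refine ⟨by simp [*, Ideal.add_mem], by simp [*, Ideal.add_mem], fun q hq => ?_⟩ <;>
        have := hprime q hq <;>
        simp [Ideal.IsPrime.mul_mem_iff_mem_or_mem, hαs q hq, hβs q hq, -neg_add_rev]
    · simp only [List.map_cons, List.map_nil, List.sum_cons, List.sum_nil]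
      ring
  | add y _ z _ hy hz =>
    obtain ⟨Ly, hLy, rfl⟩ := hy
    obtain ⟨Lz, hLz, rfl⟩ := hz
    exact ⟨Ly ++ Lz, fun w hw => (List.mem_append.mp hw).elim (hLy w) (hLz w), by simp⟩

theorem Ideal.exists_list_sum_map_mul_eq_sum_take_notMem {a b : Ideal R} {s : Finset (Ideal R)}
    (hprime : ∀ q ∈ s, q.IsPrime) (hinf : ∀ q ∈ s, Infinite (R ⧸ q))
    (ha : ∀ q ∈ s, ¬ a ≤ q) (hb : ∀ q ∈ s, ¬ b ≤ q) {x : R} (hx : x ∈ a * b)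
    (hxs : ∀ q ∈ s, x ∉ q) :
    ∃ L : List (R × R), (∀ z ∈ L, z.1 ∈ a ∧ z.2 ∈ b ∧ ∀ q ∈ s, z.1 * z.2 ∉ q) ∧
      (L.map fun z => z.1 * z.2).sum = x ∧
      ∀ i, 0 < i → ∀ q ∈ s, ((L.map fun z => z.1 * z.2).take i).sum ∉ q := by
  obtain ⟨L, hL, hsum⟩ := Ideal.exists_list_sum_map_mul_eq hprime hinf ha hb hx
  rcases L with _ | ⟨⟨A, B⟩, H⟩
  · exact ⟨[], by simp, hsum, by simpa [← hsum] using fun _ _ => hxs⟩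
  obtain ⟨hA, hB, hAB⟩ := hL (A, B) List.mem_cons_self
  have hAs : ∀ q ∈ s, A ∉ q := fun q hq h => hAB q hq (q.mul_mem_right B h)
  set T := H.map fun z => z.1 * z.2 with hT
  obtain ⟨δ, hδ, hδs⟩ := Ideal.exists_mem_forall_mul_add_notMem b
    (insert (1, 0) ((Finset.range (T.length + 1)).image fun k => (-A, A * B + (T.take k).sum)))
    s hprime hinf hb (by
      simp only [Finset.mem_insert, Finset.mem_image]
      rintro q hq _ (rfl | ⟨k, -, rfl⟩)
      · exact .inl (hprime q hq).one_notMem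
      · exact .inl fun h => hAs q hq (by simpa using q.neg_mem h))
  simp only [Finset.mem_insert, Finset.mem_image, Finset.mem_range, forall_eq_or_imp, one_mul,
    add_zero, forall_exists_index, and_imp, forall_apply_eq_imp_iff₂] at hδs
  have hsplit : ∀ q ∈ s, ∀ k ≤ T.length, A * (B - δ) + (T.take k).sum ∉ q := fun q hq k hk => by
    convert (hδs q hq).2 k (by omega) using 2
    ring
  refine ⟨(A, B - δ) :: H ++ [(A, δ)], ?_, ?_, ?_⟩
  · simp only [List.cons_append, List.mem_cons, List.mem_append, List.not_mem_nil, or_false]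
    rintro z (rfl | hz | rfl)
    · exact ⟨hA, b.sub_mem hB hδ, fun q hq => by simpa using hsplit q hq 0 (Nat.zero_le _)⟩
    · exact hL z (List.mem_cons_of_mem _ hz)
    · exact ⟨hA, hδ, fun q hq => (hprime q hq).mul_notMem (hAs q hq) (hδs q hq).1⟩
  · rw [← hsum]
    simp only [List.cons_append, List.map_cons, List.map_append, List.map_nil, List.sum_cons,
      List.sum_append, List.sum_nil]
    ring
  · rintro (_ | i) hi q hq
    · omega
    simp only [List.cons_append, List.map_cons, List.map_append, List.take_succ_cons,
      List.sum_cons, ← hT]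
    by_cases hiT : i ≤ T.length
    · rw [List.take_append_of_le_length hiT]
      exact hsplit q hq i hiT
    · rw [List.take_of_length_le (by simp; omega)]
      convert hxs q hq using 2
      rw [← hsum]
      simp only [List.map_cons, List.map_nil, List.sum_cons, List.sum_append, List.sum_nil, ← hT]
      ring

theorem IsLocalRing.exists_list_sum_map_mul_eq_sum_take_notMem [IsLocalRing R] {ι : Type*}
    [Fintype ι] {a b : Ideal R} {p : ι → Ideal R} (hp : ∀ j, (p j).IsPrime)
    (hab : ∀ j, ¬ a * b ≤ p j) {x : R} (hx : x ∈ a * b) (hxp : ∀ j, x ∉ p j) :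
    ∃ L : List (R × R), (∀ z ∈ L, z.1 ∈ a ∧ z.2 ∈ b ∧ ∀ j, z.1 * z.2 ∉ p j) ∧
      (L.map fun z => z.1 * z.2).sum = x ∧
      ∀ i, 0 < i → ∀ j, ((L.map fun z => z.1 * z.2).take i).sum ∉ p j := by
  by_cases htop : a * b = ⊤
  · have ha : a = ⊤ := top_unique (htop ▸ Ideal.mul_le_left)
    have hb : b = ⊤ := top_unique (htop ▸ Ideal.mul_le_right)
    refine ⟨[(x, 1)], by simp [ha, hb, hxp], by simp, ?_⟩
    rintro (_ | i) hi j <;> simp_all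
  have hmax (j) : p j ≠ maximalIdeal R := fun h => hab j (h ▸ le_maximalIdeal htop)
  simpa using Ideal.exists_list_sum_map_mul_eq_sum_take_notMem (s := Finset.univ.image p)
    (by simpa using hp)
    (by simpa using fun j => have := hp j; infinite_quotient_of_ne_maximalIdeal (hmax j))
    (by simpa using fun j h => hab j (Ideal.mul_le_left.trans h))
    (by simpa using fun j h => hab j (Ideal.mul_le_right.trans h)) hx (by simpa using hxp)

end

theorem stmt5_general {R : Type} [CommRing R] [IsLocalRing R]
    (a b : Ideal R) (n : ℕ) (p : Fin n → Ideal R) (hp : ∀ j, (p j).IsPrime)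
    (hab : ∀ j, ¬ a * b ≤ p j) (x : R) (hx : x ∈ a * b) (hxp : ∀ j, x ∉ p j) :
    ∃ (r : ℕ) (u v : Fin r → R), (∀ i, u i ∈ a) ∧ (∀ i, v i ∈ b) ∧
      x = ∑ i, u i * v i ∧
      ∀ (i : Fin r) (j : Fin n), u i * v i ∉ p j ∧
        (∑ k ∈ Finset.univ.filter (fun k => k ≤ i), u k * v k) ∉ p j := by
  obtain ⟨L, hL, hsum, hpartial⟩ :=
    IsLocalRing.exists_list_sum_map_mul_eq_sum_take_notMem hp hab hx hxp
  refine ⟨L.length, fun i => L[i].1, fun i => L[i].2, fun i => (hL _ (L.getElem_mem i.2)).1,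
    fun i => (hL _ (L.getElem_mem i.2)).2.1, ?_, fun i j => ⟨(hL _ (L.getElem_mem i.2)).2.2 j, ?_⟩⟩
  · rw [← hsum, ← List.ofFn_getElem_eq_map, List.sum_ofFn]
    rfl
  · rw [sum_filter_le_eq_sum_take (fun z : R × R => z.1 * z.2)]
    exact hpartial _ i.succ_pos j

/-- Prime avoidance for a product of ideals: if `x ∈ ab` avoids the primes
`p_1, …, p_n` (none of which contains `ab`), then `x = a₁b₁ + ⋯ + a_rb_r` with `a_i ∈ a`,
`b_i ∈ b`, and all products `a_ib_i` and partial sums `a₁b₁ + ⋯ + a_ib_i` avoid every `p_j`. -/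
theorem stmt5 {R : Type} [CommRing R] [IsLocalRing R] [IsNoetherianRing R]
    (a b : Ideal R) (n : ℕ) (p : Fin n → Ideal R) (hp : ∀ j, (p j).IsPrime)
    (hab : ∀ j, ¬ a * b ≤ p j) (x : R) (hx : x ∈ a * b) (hxp : ∀ j, x ∉ p j) :
    ∃ (r : ℕ) (u v : Fin r → R), (∀ i, u i ∈ a) ∧ (∀ i, v i ∈ b) ∧
      x = ∑ i, u i * v i ∧
      ∀ (i : Fin r) (j : Fin n), u i * v i ∉ p j ∧
        (∑ k ∈ Finset.univ.filter (fun k => k ≤ i), u k * v k) ∉ p j :=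
  stmt5_general a b n p hp hab x hx hxp
end

section
/- Let (R,m) be a Noetherian local ring, M a finitely generated R-module of dimension d ≥ 2, and x a parameter element of M with x ∉ p for every p ∈ Ass(U_M(0)) \ {m}, where U_M(0) is the unmixed component of M. Then U_M(0) ∩ xM = x·U_M(0), and consequently there is a short exact sequence 0 → U_M(0)/x·U_M(0) → M/xM → M̄/xM̄ → 0 where M̄ = M/U_M(0); moreover the image of U_M(0)/x·U_M(0) in M/xM is contained in U_{M/xM}(0). -/
open Submodule IsLocalRing Classical CategoryTheory

/-!
Let `N = (U :_M x)`. It contains `U`, and `x` kills `N/U`, so `Supp N ⊆ Supp U ∪ Supp (M/xM)`;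
both have dimension `< d`, hence `N = U` by maximality of the unmixed component. Thus `x` is
regular on `M/U`, which gives `U ∩ xM = xU` and the short exact sequence. The image of `U` in
`M/xM` is a quotient of `U/xU`. Either `x` avoids the minimal primes of `Ann U` (these are
associated), so that `dim U/xU < dim U ≤ d - 1`, or `m` is minimal over `Ann U` and `dim U ≤ 0`;
in both cases the image has dimension `< d - 1` and so lies in `U_{M/xM}(0)`.
-/

-- A plain `open Order` would also open `Classical.Order` (as `Classical` is open), whose scoped
-- `LT` and `Max` instances on `WithBot ℕ∞` clash with the lattice ones.
open Module _root_.Order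

lemma Order.length_le_krullDim_of_head_mem {α : Type*} [Preorder α] {s u : Set α}
    (hs : IsUpperSet s) (c : LTSeries u) (hc : (c.head : α) ∈ s) :
    (c.length : WithBot ℕ∞) ≤ krullDim s :=
  LTSeries.length_le_krullDim
    { length := c.length
      toFun := fun i => ⟨c i, hs (c.head_le i) hc⟩
      step := c.step }

lemma Order.krullDim_le_sup_of_subset_union {α : Type*} [Preorder α] {s t u : Set α}
    (hs : IsUpperSet s) (ht : IsUpperSet t) (h : u ⊆ s ∪ t) :
    krullDim u ≤ krullDim s ⊔ krullDim t := by
  refine iSup_le fun c => ?_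
  rcases h c.head.2 with hc | hc
  exacts [(length_le_krullDim_of_head_mem hs c hc).trans le_sup_left,
    (length_le_krullDim_of_head_mem ht c hc).trans le_sup_right]

section Support

variable {R : Type*} [CommRing R] {M N P : Type*} [AddCommGroup M] [Module R M]
  [AddCommGroup N] [Module R N] [AddCommGroup P] [Module R P]

lemma Module.isUpperSet_support : IsUpperSet (support R M) :=
  fun _ _ h hp => mem_support_mono h hp

lemma Module.supportDim_le_sup_of_support_subset_union
    (h : support R M ⊆ support R N ∪ support R P) :
    supportDim R M ≤ supportDim R N ⊔ supportDim R P :=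
  krullDim_le_sup_of_subset_union isUpperSet_support isUpperSet_support h

lemma Module.support_comap_lsmul_subset [Module.Finite R M] (U : Submodule R M) (x : R) :
    support R (U.comap (LinearMap.lsmul R M x)) ⊆
      support R U ∪ support R (M ⧸ (Ideal.span {x} • ⊤ : Submodule R M)) := by
  intro p hp
  by_cases hpU : p ∈ support R U
  · exact Or.inl hpU
  right
  obtain ⟨n, hn⟩ := mem_support_iff'.mp hp
  obtain ⟨r, hr, hrx⟩ := notMem_support_iff'.mp hpU ⟨x • (n : M), n.2⟩
  have hrxn : (r * x) • n = 0 :=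
    Subtype.ext (by simpa [mul_smul] using congrArg Subtype.val hrx)
  have hx : x ∈ p.asIdeal :=
    (p.2.mem_or_mem (not_not.mp fun h => hn _ h hrxn)).resolve_left hr
  rw [support_quotient]
  exact ⟨support_subset_of_injective _ (Submodule.injective_subtype _) hp,
    (Ideal.span_singleton_le_iff_mem _).mpr hx⟩

end Support

lemma moduleDim_eq_supportDim {R : Type} [CommRing R] (N : Type) [AddCommGroup N] [Module R N]
    [Module.Finite R N] : moduleDim R N = supportDim R N :=
  (supportDim_eq_ringKrullDim_quotient_annihilator R N).symm

lemma IsUnmixedComponent.isSMulRegular_quotient {R : Type} [CommRing R] [IsNoetherianRing R]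
    {M : Type} [AddCommGroup M] [Module R M] [Module.Finite R M] {d : ℕ} {U : Submodule R M}
    (hU : IsUnmixedComponent d U) {x : R}
    (hx : moduleDim R (M ⧸ (Ideal.span {x} • ⊤ : Submodule R M)) < d) :
    IsSMulRegular (M ⧸ U) x := by
  rw [isSMulRegular_on_quot_iff_lsmul_comap_le]
  refine hU.2 _ ?_
  have hUd := hU.1
  rw [moduleDim_eq_supportDim] at hx hUd ⊢
  exact (supportDim_le_sup_of_support_subset_union (support_comap_lsmul_subset U x)).trans_lt
    (sup_lt_iff.mpr ⟨hUd, hx⟩)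

namespace Submodule

variable {R : Type*} [CommRing R] {M N : Type*} [AddCommGroup M] [Module R M]
  [AddCommGroup N] [Module R N] (I : Ideal R) (U : Submodule R M)

lemma inf_span_singleton_smul_top_eq_of_isSMulRegular {x : R} (hx : IsSMulRegular (M ⧸ U) x) :
    U ⊓ (Ideal.span {x} • ⊤ : Submodule R M) = Ideal.span {x} • U := by
  refine le_antisymm ?_ (le_inf smul_le_right (smul_mono_right _ le_top))
  rw [ideal_span_singleton_smul, ideal_span_singleton_smul, inf_comm]
  exact smul_top_inf_eq_smul_of_isSMulRegular_on_quot hx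

lemma mapQ_smul_top_surjective {f : M →ₗ[R] N} (hf : Function.Surjective f) :
    Function.Surjective (mapQ (I • ⊤) (I • ⊤) f (smul_top_le_comap_smul_top I f)) := by
  rw [← LinearMap.range_eq_top, range_mapQ, LinearMap.range_eq_top.mpr hf, map_top, range_mkQ]

lemma mapQ_smul_top_subtype_injective (h : U ⊓ I • ⊤ ≤ I • U) :
    Function.Injective
      (mapQ (I • ⊤ : Submodule R U) (I • ⊤) U.subtype (smul_top_le_comap_smul_top I _)) := by
  rw [← LinearMap.ker_eq_bot, ker_mapQ, eq_bot_iff, map_le_iff_le_comap, comap_bot, ker_mkQ,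
    ← map_le_map_iff_of_injective U.injective_subtype, map_comap_subtype, map_smul'', map_top,
    range_subtype]
  exact h

lemma exact_mapQ_smul_top_subtype_mkQ :
    Function.Exact
      (mapQ (I • ⊤ : Submodule R U) (I • ⊤) U.subtype (smul_top_le_comap_smul_top I _))
      (mapQ (I • ⊤) (I • ⊤ : Submodule R (M ⧸ U)) U.mkQ (smul_top_le_comap_smul_top I _)) := by
  refine (LinearMap.exact_subtype_mkQ U).exact_mapQ_iff _ _ |>.mpr ?_
  rw [map_smul'', map_top, range_mkQ]
  exact inf_le_right

end Submodule

section LocalRing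

variable {R : Type*} [CommRing R] [IsLocalRing R] {N : Type*} [AddCommGroup N] [Module R N]
  [Module.Finite R N]

lemma Module.supportDim_nonpos_of_maximalIdeal_mem_minimalPrimes
    (h : maximalIdeal R ∈ (annihilator R N).minimalPrimes) : supportDim R N ≤ 0 := by
  have hclosed : ∀ p ∈ support R N, p = closedPoint R := fun p hp =>
    PrimeSpectrum.ext <| le_antisymm (le_maximalIdeal p.2.ne_top)
      (h.2 ⟨p.2, mem_support_iff_of_finite.mp hp⟩ (le_maximalIdeal p.2.ne_top))
  have : Subsingleton (support R N) :=
    ⟨fun p q => Subtype.ext ((hclosed p p.2).trans (hclosed q q.2).symm)⟩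
  exact krullDim_nonpos_of_subsingleton

lemma Module.supportDim_quotSMulTop_lt_pred [IsNoetherianRing R] {d : ℕ} (hd : 2 ≤ d)
    (hN : supportDim R N < d) {x : R}
    (hx : ∀ p ∈ associatedPrimes R N, p ≠ maximalIdeal R → x ∉ p) :
    supportDim R (QuotSMulTop x N) < (d - 1 : ℕ) := by
  by_cases hmin : ∀ p ∈ (annihilator R N).minimalPrimes, x ∉ p
  · have hd : ((d : ℕ) : WithBot ℕ∞) = ((d - 1 : ℕ) : WithBot ℕ∞) + 1 := by norm_cast; omega
    exact lt_of_add_lt_add_right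
      ((supportDim_quotSMulTop_succ_le_of_notMem_minimalPrimes hmin).trans_lt (hd ▸ hN))
  push Not at hmin
  obtain ⟨p, hp, hxp⟩ := hmin
  obtain rfl : p = maximalIdeal R :=
    by_contra fun hne =>
      hx p (associatedPrimes.minimalPrimes_annihilator_subset_associatedPrimes R N hp) hne hxp
  calc supportDim R (QuotSMulTop x N) ≤ supportDim R N :=
        supportDim_le_of_surjective _ (mkQ_surjective _)
    _ ≤ 0 := supportDim_nonpos_of_maximalIdeal_mem_minimalPrimes hp
    _ < (d - 1 : ℕ) := by exact_mod_cast (by omega : 0 < d - 1)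

end LocalRing

theorem stmt12_general {R : Type} [CommRing R] [IsLocalRing R] [IsNoetherianRing R]
    (M : Type) [AddCommGroup M] [Module R M] [Module.Finite R M]
    (d : ℕ) (hd2 : 2 ≤ d)
    (U : Submodule R M) (hU : IsUnmixedComponent d U)
    (x : R) (hx : IsParamElt d M x)
    (hxp : ∀ p ∈ associatedPrimes R ↥U, p ≠ maximalIdeal R → x ∉ p) :
    U ⊓ (Ideal.span {x} • ⊤ : Submodule R M) = Ideal.span {x} • U ∧
    ∃ (f : (↥U ⧸ (Ideal.span {x} • ⊤ : Submodule R ↥U)) →ₗ[R]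
          (M ⧸ (Ideal.span {x} • ⊤ : Submodule R M)))
      (g : (M ⧸ (Ideal.span {x} • ⊤ : Submodule R M)) →ₗ[R]
          ((M ⧸ U) ⧸ (Ideal.span {x} • ⊤ : Submodule R (M ⧸ U)))),
      Function.Injective f ∧ Function.Surjective g ∧
      LinearMap.range f = LinearMap.ker g ∧
      ∀ U' : Submodule R (M ⧸ (Ideal.span {x} • ⊤ : Submodule R M)),
        IsUnmixedComponent (d - 1) U' → LinearMap.range f ≤ U' := by
  have hreg : IsSMulRegular (M ⧸ U) x :=
    hU.isSMulRegular_quotient (hx.2.trans_lt (by exact_mod_cast (by omega : d - 1 < d)))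
  have hinter := inf_span_singleton_smul_top_eq_of_isSMulRegular U hreg
  set f := mapQ (Ideal.span {x} • ⊤ : Submodule R U) (Ideal.span {x} • ⊤) U.subtype
    (smul_top_le_comap_smul_top _ _)
  refine ⟨hinter, f, mapQ _ _ U.mkQ (smul_top_le_comap_smul_top _ _),
    mapQ_smul_top_subtype_injective _ U hinter.le, mapQ_smul_top_surjective _ U.mkQ_surjective,
    (exact_mapQ_smul_top_subtype_mkQ _ U).linearMap_ker_eq.symm, fun U' hU' => hU'.2 _ ?_⟩
  have hUd := hU.1
  rw [moduleDim_eq_supportDim] at hUd ⊢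
  calc supportDim R (LinearMap.range f)
      ≤ supportDim R (U ⧸ (Ideal.span {x} • ⊤ : Submodule R U)) :=
        supportDim_le_of_surjective _ f.surjective_rangeRestrict
    _ = supportDim R (QuotSMulTop x U) := by rw [ideal_span_singleton_smul]
    _ < (d - 1 : ℕ) := supportDim_quotSMulTop_lt_pred hd2 hUd hxp

/-- If `x` is a parameter element of `M` (with `d ≥ 2`) avoiding all
`p ∈ Ass U_M(0) \ {m}`, then `U_M(0) ∩ xM = x·U_M(0)`, there is a short exact sequence
`0 → U_M(0)/xU_M(0) → M/xM → M̄/xM̄ → 0` with `M̄ = M/U_M(0)`, and the image of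
`U_M(0)/xU_M(0)` in `M/xM` is contained in `U_{M/xM}(0)`. -/
theorem stmt12 {R : Type} [CommRing R] [IsLocalRing R] [IsNoetherianRing R]
    (M : Type) [AddCommGroup M] [Module R M] [Module.Finite R M]
    (d : ℕ) (hd2 : 2 ≤ d) (hdim : moduleDim R M = (d : WithBot ℕ∞))
    (U : Submodule R M) (hU : IsUnmixedComponent d U)
    (x : R) (hx : IsParamElt d M x)
    (hxp : ∀ p ∈ associatedPrimes R ↥U, p ≠ maximalIdeal R → x ∉ p) :
    U ⊓ (Ideal.span {x} • ⊤ : Submodule R M) = Ideal.span {x} • U ∧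
    ∃ (f : (↥U ⧸ (Ideal.span {x} • ⊤ : Submodule R ↥U)) →ₗ[R]
          (M ⧸ (Ideal.span {x} • ⊤ : Submodule R M)))
      (g : (M ⧸ (Ideal.span {x} • ⊤ : Submodule R M)) →ₗ[R]
          ((M ⧸ U) ⧸ (Ideal.span {x} • ⊤ : Submodule R (M ⧸ U)))),
      Function.Injective f ∧ Function.Surjective g ∧
      LinearMap.range f = LinearMap.ker g ∧
      ∀ U' : Submodule R (M ⧸ (Ideal.span {x} • ⊤ : Submodule R M)),
        IsUnmixedComponent (d - 1) U' → LinearMap.range f ≤ U' :=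
  stmt12_general M d hd2 U hU x hx hxp
end
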